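/- Let 0 < τ₁ < ⋯ < τ_M ≤ 1, Q the collocation matrix and, for 1 ≤ m ≤ M, let Q_{Δ,m} = diag(τ₁/m, …, τ_M/m). Under the node-interpolation isomorphism with P_{M−1}, the operator I − Q_{Δ,m}⁻¹Q maps the monomial tⁿ (for 0 ≤ n ≤ M−1) to (1 − m/(n+1)) tⁿ; in particular t^{m−1} is in its kernel. -/
import Mathlib


open Polynomial Matrix Finset

noncomputable def collMat {M : ℕ} (τ : Fin M → ℝ) : Matrix (Fin M) (Fin M) ℝ :=
  Matrix.of fun i j => ∫ s in (0:ℝ)..(τ i), (Lagrange.basis Finset.univ τ j).eval s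

lemma collMat_mulVec_pow {M : ℕ} (τ : Fin M → ℝ) (hinj : Function.Injective τ)
    {n : ℕ} (hn : n + 1 ≤ M) (i : Fin M) :
    (collMat τ).mulVec (fun j => τ j ^ n) i = τ i ^ (n + 1) / (n + 1) := by
  have hdeg : (X ^ n : ℝ[X]).degree < ((univ : Finset (Fin M)).card : ℕ) := by
    rw [degree_X_pow, Finset.card_univ, Fintype.card_fin]
    exact_mod_cast Nat.lt_of_succ_le hn
  have hX := Lagrange.eq_interpolate (s := univ) (v := τ) hinj.injOn hdeg
  have key : ∀ s : ℝ, (∑ j : Fin M, (Lagrange.basis univ τ j).eval s * τ j ^ n) = s ^ n := by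
    intro s
    have := congrArg (Polynomial.eval s) hX
    simp only [Lagrange.interpolate_apply, eval_finset_sum, eval_mul, eval_C, eval_pow,
      eval_X] at this
    rw [this]
    exact Finset.sum_congr rfl fun j _ => by ring
  have hint : ∀ j : Fin M, IntervalIntegrable
      (fun s => (Lagrange.basis univ τ j).eval s * τ j ^ n) MeasureTheory.volume 0 (τ i) :=
    fun j => ((Polynomial.continuous _).mul continuous_const).intervalIntegrable _ _
  calc (collMat τ).mulVec (fun j => τ j ^ n) i
      = ∑ j : Fin M, (∫ s in (0:ℝ)..(τ i), (Lagrange.basis univ τ j).eval s) * τ j ^ n := rfl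
    _ = ∑ j : Fin M, ∫ s in (0:ℝ)..(τ i), (Lagrange.basis univ τ j).eval s * τ j ^ n := by
        refine Finset.sum_congr rfl fun j _ => ?_
        rw [intervalIntegral.integral_mul_const]
    _ = ∫ s in (0:ℝ)..(τ i), ∑ j : Fin M, (Lagrange.basis univ τ j).eval s * τ j ^ n := by
        exact (intervalIntegral.integral_finset_sum fun j _ => hint j).symm
    _ = ∫ s in (0:ℝ)..(τ i), s ^ n := by simp_rw [key]
    _ = τ i ^ (n + 1) / (n + 1) := by rw [integral_pow]; ring

/-- `(I - Q_{Δ,m}⁻¹ Q) τⁿ = (1 - m/(n+1)) τⁿ` for `0 ≤ n ≤ M-1`;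
in particular `τ^{m-1}` is in the kernel. -/
theorem flex_eigenvector (M : ℕ) (τ : Fin M → ℝ) (hmono : StrictMono τ)
    (hpos : ∀ i, 0 < τ i) (h1 : ∀ i, τ i ≤ 1) (m : ℕ) (hm1 : 1 ≤ m) (hmM : m ≤ M) :
    (∀ n : ℕ, n + 1 ≤ M →
      (1 - (Matrix.diagonal fun i => τ i / m)⁻¹ * collMat τ).mulVec (fun i => τ i ^ n) =
        (1 - (m : ℝ) / (n + 1)) • fun i => τ i ^ n) ∧
    (1 - (Matrix.diagonal fun i => τ i / m)⁻¹ * collMat τ).mulVec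
        (fun i => τ i ^ (m - 1)) = 0 := by
  have hm0 : (m : ℝ) ≠ 0 := Nat.cast_ne_zero.mpr (Nat.one_le_iff_ne_zero.mp hm1)
  have hmain : ∀ n : ℕ, n + 1 ≤ M →
      (1 - (Matrix.diagonal fun i => τ i / m)⁻¹ * collMat τ).mulVec (fun i => τ i ^ n) =
        (1 - (m : ℝ) / (n + 1)) • fun i => τ i ^ n := by
    intro n hn
    funext i
    have hτ : τ i ≠ 0 := ne_of_gt (hpos i)
    have hn1 : ((n : ℝ) + 1) ≠ 0 := by positivity
    have hDinv : (Matrix.diagonal fun i => τ i / (m:ℝ))⁻¹ =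
        Matrix.diagonal fun i => (τ i / (m:ℝ))⁻¹ := by
      refine Matrix.inv_eq_right_inv ?_
      rw [Matrix.diagonal_mul_diagonal]
      convert Matrix.diagonal_one with j
      exact mul_inv_cancel₀ (div_ne_zero (ne_of_gt (hpos j)) hm0)
    rw [Matrix.sub_mulVec, Matrix.one_mulVec, ← Matrix.mulVec_mulVec, hDinv]
    have hQ := collMat_mulVec_pow τ hmono.injective hn i
    simp only [Pi.sub_apply, Matrix.mulVec_diagonal, hQ, Pi.smul_apply, smul_eq_mul]
    field_simp
    ring
  refine ⟨hmain, ?_⟩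
  have h := hmain (m - 1) (by omega)
  rw [h]
  have : ((m - 1 : ℕ) : ℝ) + 1 = (m : ℝ) := by
    have := Nat.sub_add_cancel hm1
    exact_mod_cast congrArg (Nat.cast : ℕ → ℝ) this
  rw [this, div_self hm0, sub_self, zero_smul]
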